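/- arXiv:1412.1604 — 8 statements merged into one kernel-verified Lean document; each statement's English description precedes it below -/
import Mathlib

section
/- For every nonnegative integer l, the power series identity ∑_{j≥0} (x^j / (j! 2^j)) · ((2j+2l-1)!!/(2j-1)!!) = (∑_{j=0}^{l} (2l)!/((2l-2j)! j! 2^j) · x^{l-j}) · e^{x/2} holds. -/
/-!
Reindexing by `k = l - j`, the polynomial on the right is `P_l(x) = ∑ₖ a_{l,k} xᵏ` with
`a_{l,k} = (2l)! / ((2k)! (l-k)! 2^(l-k))`. Its Cauchy product with `e^{x/2} = ∑ (x/2)ᵐ / m!`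
has `n`-th coefficient `t_{l,n} = ∑ₖ a_{l,k} / ((n-k)! 2^(n-k))`. The coefficients satisfy
`a_{l+1,k} = (2k+2l+1) a_{l,k} + a_{l,k-1}` (the coefficientwise form of
`P_{l+1} = 2x P_l' + (x + 2l + 1) P_l`), and the shift `k ↦ k+1` multiplies the weight
`1 / ((n-k)! 2^(n-k))` by `2(n-k)`; together they give `t_{l+1,n} = (2n+2l+1) t_{l,n}`.
Starting from `t_{0,n} = 1 / (n! 2ⁿ)`, this is exactly the recursion of
`(2n+2l-1)‼ / (2n-1)‼ / (n! 2ⁿ)`, the `n`-th term of the left side.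
-/

open Finset Nat

theorem doubleFactorial_two_mul_add_two_mul_sub_one (n l : ℕ) :
    (2 * n + 2 * l - 1)‼ = (∏ i ∈ range l, (2 * n + 2 * i + 1)) * (2 * n - 1)‼ := by
  induction l with
  | zero => simp
  | succ l ih =>
    rw [prod_range_succ, mul_right_comm, ← ih,
      show 2 * n + 2 * (l + 1) - 1 = 2 * (n + l) + 1 by omega, doubleFactorial_add_one,
      show 2 * (n + l) - 1 = 2 * n + 2 * l - 1 by omega]
    ring

theorem sum_range_mul_tsum_eq_tsum_sum_range {R : Type*} [NormedRing R] [CompleteSpace R]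
    {a g : ℕ → R} {N : ℕ} (ha : ∀ k, N ≤ k → a k = 0)
    (hg : Summable fun n => ‖g n‖) :
    (∑ k ∈ range N, a k) * ∑' n, g n = ∑' n, ∑ k ∈ range (n + 1), a k * g (n - k) := by
  have ha' : ∀ k ∉ range N, a k = 0 := fun k hk => ha k (by simpa using hk)
  rw [← tsum_eq_sum (L := .unconditional ℕ) ha']
  refine tsum_mul_tsum_eq_tsum_sum_range_of_summable_norm ?_ hg
  exact summable_of_ne_finset_zero (s := range N) fun k hk => by simp [ha' k hk]

namespace DoubleFactorialRatio

noncomputable def coeff (l k : ℕ) : ℝ :=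
  if k ≤ l then (2 * l)! / ((2 * k)! * (l - k)! * 2 ^ (l - k)) else 0

theorem coeff_of_lt {l k : ℕ} (h : l < k) : coeff l k = 0 := if_neg h.not_ge

theorem coeff_zero_zero : coeff 0 0 = 1 := by simp [coeff]

theorem cast_factorial_two_mul_succ (n : ℕ) :
    ((2 * (n + 1))! : ℝ) = (2 * n + 2) * (2 * n + 1) * (2 * n)! := by
  rw [show 2 * (n + 1) = 2 * n + 1 + 1 by ring, factorial_succ, factorial_succ]
  push_cast; ring

theorem coeff_succ_zero (l : ℕ) : coeff (l + 1) 0 = (2 * l + 1) * coeff l 0 := by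
  simp only [coeff, zero_le, if_true, mul_zero, factorial_zero, Nat.sub_zero, cast_one, one_mul,
    cast_factorial_two_mul_succ, factorial_succ, pow_succ]
  push_cast
  field_simp

theorem coeff_succ_succ (l k : ℕ) :
    coeff (l + 1) (k + 1) = (2 * k + 2 * l + 3) * coeff l (k + 1) + coeff l k := by
  rcases lt_trichotomy k l with hkl | rfl | hlk
  · obtain ⟨m, rfl⟩ := Nat.exists_eq_add_of_lt hkl
    simp only [coeff, if_pos (show k + 1 ≤ k + m + 1 + 1 by omega),
      if_pos (show k + 1 ≤ k + m + 1 by omega), if_pos (show k ≤ k + m + 1 by omega),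
      show k + m + 1 + 1 - (k + 1) = m + 1 by omega, show k + m + 1 - (k + 1) = m by omega,
      show k + m + 1 - k = m + 1 by omega, cast_factorial_two_mul_succ, factorial_succ, pow_succ]
    push_cast
    field_simp
    ring
  · simp [coeff, factorial_ne_zero]
  · rw [coeff_of_lt (by omega), coeff_of_lt (by omega), coeff_of_lt hlk]
    ring

noncomputable def taylorCoeff (l n : ℕ) : ℝ :=
  ∑ k ∈ range (n + 1), coeff l k / ((n - k)! * 2 ^ (n - k))

theorem taylorCoeff_zero (n : ℕ) : taylorCoeff 0 n = 1 / (n ! * 2 ^ n) := by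
  rw [taylorCoeff, sum_range_succ', sum_eq_zero fun k _ => by rw [coeff_of_lt k.succ_pos, zero_div],
    coeff_zero_zero, zero_add, Nat.sub_zero]

theorem taylorCoeff_succ (l n : ℕ) :
    taylorCoeff (l + 1) n = (2 * n + 2 * l + 1) * taylorCoeff l n := by
  have shifted : ∑ k ∈ range n, coeff l k / ((n - (k + 1))! * 2 ^ (n - (k + 1))) =
      ∑ k ∈ range (n + 1), 2 * ((n : ℝ) - k) * (coeff l k / ((n - k)! * 2 ^ (n - k))) := by
    rw [sum_range_succ, sub_self, mul_zero, zero_mul, add_zero]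
    refine sum_congr rfl fun k hk => ?_
    obtain ⟨m, rfl⟩ := Nat.exists_eq_add_of_lt (mem_range.mp hk)
    rw [show k + m + 1 - (k + 1) = m by omega, show k + m + 1 - k = m + 1 by omega,
      factorial_succ, pow_succ]
    push_cast
    field_simp
    ring
  have diagonal : ∑ k ∈ range n,
        (2 * k + 2 * l + 3) * coeff l (k + 1) / ((n - (k + 1))! * 2 ^ (n - (k + 1)))
      + (2 * l + 1) * coeff l 0 / ((n - 0)! * 2 ^ (n - 0)) =
      ∑ k ∈ range (n + 1), (2 * k + 2 * l + 1) * (coeff l k / ((n - k)! * 2 ^ (n - k))) := by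
    rw [sum_range_succ' _ n]
    congr 1
    · refine sum_congr rfl fun k _ => ?_
      push_cast
      ring
    · simp only [cast_zero, mul_zero, zero_add]
      ring
  rw [taylorCoeff, taylorCoeff, sum_range_succ']
  simp only [coeff_succ_succ, coeff_succ_zero, add_div, sum_add_distrib, shifted]
  rw [add_right_comm, diagonal, ← sum_add_distrib, mul_sum]
  refine sum_congr rfl fun k _ => by ring

theorem taylorCoeff_eq_prod (l n : ℕ) :
    taylorCoeff l n = (∏ i ∈ range l, (2 * n + 2 * i + 1 : ℝ)) / (n ! * 2 ^ n) := by
  induction l with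
  | zero => rw [taylorCoeff_zero, prod_range_zero]
  | succ l ih => rw [taylorCoeff_succ, ih, prod_range_succ]; ring

theorem taylorCoeff_eq (l n : ℕ) :
    taylorCoeff l n = (2 * n + 2 * l - 1)‼ / (2 * n - 1)‼ / (n ! * 2 ^ n) := by
  rw [taylorCoeff_eq_prod, doubleFactorial_two_mul_add_two_mul_sub_one, cast_mul,
    mul_div_cancel_right₀ _ (cast_ne_zero.mpr (doubleFactorial_pos _).ne')]
  norm_cast

theorem sum_coeff_mul_pow (l : ℕ) (x : ℝ) :
    ∑ k ∈ range (l + 1), coeff l k * x ^ k =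
      ∑ j ∈ range (l + 1),
        ((2 * l)! : ℝ) / ((2 * l - 2 * j)! * j ! * 2 ^ j) * x ^ (l - j) := by
  rw [← sum_range_reflect]
  refine sum_congr rfl fun j hj => ?_
  have hjl : j ≤ l := Nat.lt_succ_iff.mp (mem_range.mp hj)
  rw [coeff, if_pos (by omega), show l + 1 - 1 - j = l - j by omega,
    show l - (l - j) = j by omega, show 2 * (l - j) = 2 * l - 2 * j by omega]

theorem sum_coeff_mul_pow_mul_exp_half (l : ℕ) (x : ℝ) :
    (∑ k ∈ range (l + 1), coeff l k * x ^ k) * Real.exp (x / 2) =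
      ∑' n, taylorCoeff l n * x ^ n := by
  have hexp : Summable fun m => ‖(x / 2) ^ m / (m ! : ℝ)‖ := by
    simpa [norm_div, norm_pow] using Real.summable_pow_div_factorial ‖x / 2‖
  rw [Real.exp_eq_exp_ℝ, NormedSpace.exp_eq_tsum_div,
    sum_range_mul_tsum_eq_tsum_sum_range (fun k hk => by rw [coeff_of_lt hk, zero_mul]) hexp]
  refine tsum_congr fun n => ?_
  rw [taylorCoeff, sum_mul]
  refine sum_congr rfl fun k hk => ?_
  rw [div_pow, ← pow_mul_pow_sub x (Nat.lt_succ_iff.mp (mem_range.mp hk))]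
  field_simp

end DoubleFactorialRatio

/-- For every `l : ℕ`,
`∑_{j≥0} (x^j/(j! 2^j)) · ((2j+2l-1)‼/(2j-1)‼)
  = (∑_{j=0}^{l} (2l)!/((2l-2j)! j! 2^j) x^{l-j}) · e^{x/2}`. -/
theorem doubleFactorial_ratio_series (l : ℕ) (x : ℝ) :
    ∑' j : ℕ, x ^ j / ((j.factorial : ℝ) * 2 ^ j) *
        ((Nat.doubleFactorial (2 * j + 2 * l - 1) : ℝ) /
          (Nat.doubleFactorial (2 * j - 1) : ℝ))
      = (∑ j ∈ Finset.range (l + 1),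
          ((2 * l).factorial : ℝ) /
            (((2 * l - 2 * j).factorial : ℝ) * (j.factorial : ℝ) * 2 ^ j) *
            x ^ (l - j)) * Real.exp (x / 2) := by
  rw [← DoubleFactorialRatio.sum_coeff_mul_pow,
    DoubleFactorialRatio.sum_coeff_mul_pow_mul_exp_half]
  refine tsum_congr fun n => ?_
  rw [DoubleFactorialRatio.taylorCoeff_eq]
  ring
end

section
/- For every nonnegative integer l, the power series identity ∑_{j≥0} (x^j / (j! 2^j)) · ((2j+2l+1)!!/(2j+1)!!) = (∑_{j=0}^{l} (2l+1)!/((2l+1-2j)! j! 2^j) · x^{l-j}) · e^{x/2} holds. -/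
/-!
As a polynomial in `j`, the ratio `(2j+2l+1)‼/(2j+1)‼ = ∏_{i=1}^{l} (2j+2i+1)` expands in the
falling factorials `2^m j^{(m)}` with coefficients `(2l+1)!/((2m+1)! (l-m)! 2^(l-m))`; by induction
on `l` this reduces to a Pascal-type recurrence for the coefficients together with
`j · j^{(m)} = j^{(m+1)} + m · j^{(m)}`. Since `∑_j j^{(m)} y^j/j! = y^m e^y`, the series with
`y = x/2` sums term by term to `∑_m coeff_m · x^m · e^{x/2}`, which is the right-hand side indexed
backwards (`m = l - j`).
-/

open Finset Nat

theorem Nat.mul_descFactorial (n k : ℕ) :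
    n * n.descFactorial k = n.descFactorial (k + 1) + k * n.descFactorial k := by
  rcases le_or_gt k n with h | h
  · rw [descFactorial_succ, ← add_mul, Nat.sub_add_cancel h]
  · simp [descFactorial_eq_zero_iff_lt.2 h]

theorem hasSum_descFactorial_mul_pow_div_factorial (m : ℕ) (y : ℝ) :
    HasSum (fun j : ℕ => (j.descFactorial m : ℝ) * y ^ j / j !) (y ^ m * Real.exp y) := by
  rw [← hasSum_nat_add_iff' m]
  have hhead : ∑ j ∈ range m, (j.descFactorial m : ℝ) * y ^ j / j ! = 0 :=
    sum_eq_zero fun j hj => by simp [descFactorial_eq_zero_iff_lt.2 (mem_range.1 hj)]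
  have hshift (j : ℕ) :
      ((j + m).descFactorial m : ℝ) * y ^ (j + m) / (j + m)! = y ^ m * (y ^ j / j !) := by
    have hfac : ((j + m)! : ℝ) = j ! * (j + m).descFactorial m := by
      have := factorial_mul_descFactorial (le_add_left m j)
      rw [Nat.add_sub_cancel] at this
      exact_mod_cast this.symm
    have hd : ((j + m).descFactorial m : ℝ) ≠ 0 := by
      exact_mod_cast (descFactorial_pos.2 (le_add_left m j)).ne'
    rw [hfac, pow_add]
    field_simp
  simp only [hhead, sub_zero, hshift]
  rw [Real.exp_eq_exp_ℝ]
  exact (NormedSpace.expSeries_div_hasSum_exp y).mul_left _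

/-- The value `0` for `m > l` makes `doubleFactorialRatioCoeff_succ_succ` hold for all `m`. -/
noncomputable def doubleFactorialRatioCoeff (l m : ℕ) : ℝ :=
  if m ≤ l then (2 * l + 1)! / ((2 * m + 1)! * (l - m)! * 2 ^ (l - m)) else 0

theorem doubleFactorialRatioCoeff_of_lt {l m : ℕ} (h : l < m) : doubleFactorialRatioCoeff l m = 0 :=
  if_neg (not_le.2 h)

theorem doubleFactorialRatioCoeff_self_sub {l k : ℕ} (hk : k ≤ l) :
    doubleFactorialRatioCoeff l (l - k) = (2 * l + 1)! / ((2 * l + 1 - 2 * k)! * k ! * 2 ^ k) := by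
  rw [doubleFactorialRatioCoeff, if_pos (Nat.sub_le l k), Nat.sub_sub_self hk,
    show 2 * (l - k) + 1 = 2 * l + 1 - 2 * k by omega]

theorem doubleFactorialRatioCoeff_succ_zero (l : ℕ) :
    doubleFactorialRatioCoeff (l + 1) 0 = (2 * l + 3) * doubleFactorialRatioCoeff l 0 := by
  simp only [doubleFactorialRatioCoeff, zero_le, if_true, Nat.sub_zero, mul_zero, zero_add,
    show 2 * (l + 1) + 1 = 2 * l + 1 + 2 by ring, factorial_succ, pow_succ]
  push_cast
  field_simp
  ring

theorem doubleFactorialRatioCoeff_succ_succ (l m : ℕ) :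
    doubleFactorialRatioCoeff (l + 1) (m + 1) =
      doubleFactorialRatioCoeff l m + (2 * m + 2 * l + 5) * doubleFactorialRatioCoeff l (m + 1) := by
  rcases lt_trichotomy m l with h | rfl | h
  · obtain ⟨k, rfl⟩ : ∃ k, l = m + 1 + k := ⟨l - (m + 1), by omega⟩
    simp only [doubleFactorialRatioCoeff, if_pos (show m + 1 ≤ m + 1 + k + 1 by omega),
      if_pos (show m ≤ m + 1 + k by omega), if_pos (show m + 1 ≤ m + 1 + k by omega),
      show m + 1 + k + 1 - (m + 1) = k + 1 by omega, show m + 1 + k - m = k + 1 by omega,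
      show m + 1 + k - (m + 1) = k by omega,
      show 2 * (m + 1 + k + 1) + 1 = 2 * (m + 1 + k) + 1 + 2 by ring,
      show 2 * (m + 1) + 1 = 2 * m + 1 + 2 by ring, factorial_succ]
    push_cast
    field_simp
    ring
  · simp [doubleFactorialRatioCoeff, div_self, factorial_ne_zero]
  · simp [doubleFactorialRatioCoeff_of_lt, h, h.trans (lt_succ_self m)]

theorem sum_doubleFactorialRatioCoeff_succ_mul (T : ℕ → ℝ) (y : ℝ)
    (hT : ∀ m : ℕ, y * T m = T (m + 1) + 2 * m * T m) (l : ℕ) :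
    ∑ m ∈ range (l + 2), doubleFactorialRatioCoeff (l + 1) m * T m =
      (y + 2 * l + 3) * ∑ m ∈ range (l + 1), doubleFactorialRatioCoeff l m * T m := by
  have hshift : ∑ m ∈ range (l + 1), (2 * m + 2 * l + 3) * doubleFactorialRatioCoeff l m * T m =
      ∑ m ∈ range (l + 1), (2 * m + 2 * l + 5) * doubleFactorialRatioCoeff l (m + 1) * T (m + 1)
        + (2 * l + 3) * doubleFactorialRatioCoeff l 0 * T 0 := by
    have := sum_range_succ' (fun m => (2 * m + 2 * l + 3) * doubleFactorialRatioCoeff l m * T m)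
      (l + 1)
    rw [sum_range_succ, doubleFactorialRatioCoeff_of_lt (lt_succ_self l), mul_zero, zero_mul,
      add_zero] at this
    rw [this]
    push_cast
    congr 1
    · exact sum_congr rfl fun m _ => by ring
    · ring
  calc ∑ m ∈ range (l + 2), doubleFactorialRatioCoeff (l + 1) m * T m
      = ∑ m ∈ range (l + 1), doubleFactorialRatioCoeff l m * T (m + 1) +
          (∑ m ∈ range (l + 1), (2 * m + 2 * l + 5) * doubleFactorialRatioCoeff l (m + 1) * T (m + 1)
            + (2 * l + 3) * doubleFactorialRatioCoeff l 0 * T 0) := by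
        rw [sum_range_succ', doubleFactorialRatioCoeff_succ_zero, ← add_assoc, ← sum_add_distrib]
        simp only [doubleFactorialRatioCoeff_succ_succ]
        congr 1
        exact sum_congr rfl fun m _ => by ring
    _ = (y + 2 * l + 3) * ∑ m ∈ range (l + 1), doubleFactorialRatioCoeff l m * T m := by
        rw [← hshift, ← sum_add_distrib, mul_sum]
        exact sum_congr rfl fun m _ => by linear_combination -doubleFactorialRatioCoeff l m * hT m

theorem doubleFactorial_ratio_eq_sum (l j : ℕ) :
    ((2 * j + 2 * l + 1)‼ : ℝ) / (2 * j + 1)‼ =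
      ∑ m ∈ range (l + 1), doubleFactorialRatioCoeff l m * (2 ^ m * j.descFactorial m) := by
  induction l with
  | zero =>
    simp [doubleFactorialRatioCoeff, div_self, (doubleFactorial_pos _).ne']
  | succ l ih =>
    rw [sum_doubleFactorialRatioCoeff_succ_mul _ (2 * j) fun m => ?_, ← ih,
      show 2 * j + 2 * (l + 1) + 1 = 2 * j + 2 * l + 1 + 2 by ring, doubleFactorial_add_two]
    · push_cast
      ring
    · have := congrArg (Nat.cast (R := ℝ)) (Nat.mul_descFactorial j m)
      push_cast at this
      linear_combination (2 : ℝ) ^ (m + 1) * this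

/-- For every `l : ℕ`,
`∑_{j≥0} (x^j/(j! 2^j)) · ((2j+2l+1)‼/(2j+1)‼)
  = (∑_{j=0}^{l} (2l+1)!/((2l+1-2j)! j! 2^j) x^{l-j}) · e^{x/2}`. -/
theorem doubleFactorial_ratio_series_odd (l : ℕ) (x : ℝ) :
    ∑' j : ℕ, x ^ j / ((j.factorial : ℝ) * 2 ^ j) *
        ((Nat.doubleFactorial (2 * j + 2 * l + 1) : ℝ) /
          (Nat.doubleFactorial (2 * j + 1) : ℝ))
      = (∑ j ∈ Finset.range (l + 1),
          ((2 * l + 1).factorial : ℝ) /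
            (((2 * l + 1 - 2 * j).factorial : ℝ) * (j.factorial : ℝ) * 2 ^ j) *
            x ^ (l - j)) * Real.exp (x / 2) := by
  have hsum := hasSum_sum (s := range (l + 1)) fun m _ =>
    (hasSum_descFactorial_mul_pow_div_factorial m (x / 2)).mul_left
      (doubleFactorialRatioCoeff l m * 2 ^ m)
  calc _ = ∑' j : ℕ, ∑ m ∈ range (l + 1), doubleFactorialRatioCoeff l m * 2 ^ m *
        ((j.descFactorial m : ℝ) * (x / 2) ^ j / j !) := by
        refine tsum_congr fun j => ?_
        rw [doubleFactorial_ratio_eq_sum, mul_sum]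
        refine sum_congr rfl fun m _ => ?_
        rw [div_pow]
        field_simp
    _ = ∑ m ∈ range (l + 1),
          doubleFactorialRatioCoeff l m * 2 ^ m * ((x / 2) ^ m * Real.exp (x / 2)) :=
        hsum.tsum_eq
    _ = _ := by
        rw [← sum_range_reflect, sum_mul]
        refine sum_congr rfl fun k hk => ?_
        rw [Nat.add_sub_cancel,
          doubleFactorialRatioCoeff_self_sub (Nat.lt_succ_iff.1 (mem_range.1 hk)), div_pow]
        field_simp
end

section
/- Let t_0, t_1, t_2, … be formal variables and let I_0 be the formal power series I_0 = ∑_{k≥1} (1/k) ∑_{p_1+⋯+p_k = k-1} (t_{p_1}/p_1!) ⋯ (t_{p_k}/p_k!). Then I_0 satisfies the fixed-point equation I_0 = ∑_{n≥0} t_n I_0^n / n!. -/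
open MvPowerSeries

noncomputable instance : TopologicalSpace (MvPowerSeries ℕ ℝ) :=
  Pi.topologicalSpace

/-- The formal power series
`I₀ = ∑_{k≥1} (1/k) ∑_{p₁+⋯+p_k = k-1} (t_{p₁}/p₁!) ⋯ (t_{p_k}/p_k!)`
in the variables `t₀, t₁, …` (here `t_n` is `MvPowerSeries.X n`). -/
noncomputable def I0series : MvPowerSeries ℕ ℝ :=
  ∑' k : ℕ, ((k : ℝ) + 1)⁻¹ •
    ∑ p ∈ Finset.Nat.antidiagonalTuple (k + 1) k,
      (∏ i, ((p i).factorial : ℝ)⁻¹) • ∏ i, MvPowerSeries.X (p i)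

/-!
Put `φ(u) = ∑ tₙ uⁿ/n!`. Grading `ℝ⟦t₀, t₁, …⟧` by total degree, i.e. substituting `tₙ ↦ X tₙ`,
turns `I₀` into a one-variable series `Y` whose `Xᵏ`-coefficient is `(1/k) [u^(k-1)] φ(u)ᵏ`.
By Lagrange inversion, applied over the fraction field of `ℝ⟦t₀, t₁, …⟧` where `φ(0) = t₀` is
invertible, this is the coefficient of the solution of `Y = X φ(Y)`, which exists as a
compositional inverse of `X / φ`. Reading that equation in each degree gives `I₀ = φ(I₀)`.

Lagrange inversion itself is the residue argument: for `T = X V`, the coefficient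
`[X^k] T' / V^(k+1)` is the residue of `T' / T^(k+1)`, which vanishes for `k ≠ 0` because
`T' / T^(k+1)` is then a derivative.
-/

open Finset

namespace PowerSeries

section CommSemiring

variable {R : Type*} [CommSemiring R]

theorem coeff_prod_fin {k : ℕ} (f : Fin k → R⟦X⟧) (n : ℕ) :
    coeff n (∏ i, f i) = ∑ p ∈ Nat.antidiagonalTuple k n, ∏ i, coeff (p i) (f i) := by
  rw [coeff_prod]
  refine sum_nbij' (fun l ↦ ⇑l) (fun p ↦ Finsupp.equivFunOnFinite.symm p) ?_ ?_ ?_ ?_ ?_ <;>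
    simp [Nat.mem_antidiagonalTuple]

theorem coeff_pow_eq_sum_antidiagonalTuple (f : R⟦X⟧) (k n : ℕ) :
    coeff n (f ^ k) = ∑ p ∈ Nat.antidiagonalTuple k n, ∏ i, coeff (p i) f := by
  rw [← coeff_prod_fin, prod_const, card_univ, Fintype.card_fin]

end CommSemiring

section CommRing

variable {S : Type*} [CommRing S]

theorem X_pow_dvd_subst_sub_sum (φ : S⟦X⟧) {Y : S⟦X⟧} (hY : constantCoeff Y = 0) (N : ℕ) :
    X ^ N ∣ φ.subst Y - ∑ n ∈ range N, C (coeff n φ) * Y ^ n := by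
  have hY' : HasSubst Y := HasSubst.of_constantCoeff_zero' hY
  obtain ⟨G, hG⟩ : X ^ N ∣ φ - (trunc N φ : S⟦X⟧) := by
    rw [X_pow_dvd_iff]
    intro m hm
    simp [coeff_trunc, hm]
  rw [← eval₂_trunc_eq_sum_range, ← algebraMap_eq, ← Polynomial.aeval_def, ← subst_coe hY',
    ← subst_sub hY', hG, subst_mul hY', subst_pow hY', subst_X hY']
  exact (pow_dvd_pow_of_dvd (X_dvd_iff.mpr hY) N).mul_right _

theorem coeff_eq_sum_of_eq_X_mul_subst {φ Y : S⟦X⟧} (hY : Y = X * φ.subst Y) (p : ℕ) :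
    coeff p Y = ∑ n ∈ range p, coeff p (X * (C (coeff n φ) * Y ^ n)) := by
  obtain ⟨G, hG⟩ := X_pow_dvd_subst_sub_sum φ (Y := Y) (by rw [hY]; simp) p
  conv_lhs => rw [hY, sub_eq_iff_eq_add'.mp hG, mul_add, map_add, ← mul_assoc, ← pow_succ',
    coeff_X_pow_mul', if_neg (by omega), add_zero, mul_sum, map_sum]

end CommRing

section Field

variable {K : Type*} [Field K]

theorem exists_eq_X_mul_subst {φ : K⟦X⟧} (hφ : constantCoeff φ ≠ 0) :
    ∃ T : K⟦X⟧, T = X * φ.subst T := by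
  set ψ : K⟦X⟧ := X * φ⁻¹
  have hψ0 : constantCoeff ψ = 0 := by simp [ψ]
  have hψ1 : IsUnit (coeff 1 ψ) := by simp [ψ, coeff_succ_X_mul, hφ]
  set T := ψ.substInvOfIsUnit hψ1
  have hT : HasSubst T := HasSubst.substInvOfIsUnit ψ hψ1
  have hinv : φ⁻¹.subst T * φ.subst T = 1 := by
    rw [← subst_mul hT, PowerSeries.inv_mul_cancel φ hφ, ← coe_substAlgHom hT, map_one]
  have hψT : ψ.subst T = X := subst_substInvOfIsUnit_right ψ hψ0 hψ1
  rw [subst_mul hT, subst_X hT] at hψT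
  exact ⟨T, by rw [← hψT, mul_assoc, hinv, mul_one]⟩

variable [CharZero K]

theorem coeff_inv_pow_mul_derivative_X_mul {V : K⟦X⟧} (hV : constantCoeff V ≠ 0) (k : ℕ) :
    coeff k (V⁻¹ ^ (k + 1) * d⁄dX K (X * V)) = if k = 0 then 1 else 0 := by
  have hVinv : V⁻¹ * V = 1 := PowerSeries.inv_mul_cancel V hV
  have hderiv : d⁄dX K (X * V) = V + X * d⁄dX K V := by
    rw [Derivation.leibniz, derivative_X, smul_eq_mul, smul_eq_mul]
    ring
  cases k with
  | zero => simp [hderiv, coeff_zero_eq_constantCoeff, hV]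
  | succ m =>
    have hexact : (m + 1) • (V⁻¹ ^ (m + 1 + 1) * d⁄dX K (X * V)) =
        (m + 1) • V⁻¹ ^ (m + 1) - X * d⁄dX K (V⁻¹ ^ (m + 1)) := by
      rw [Derivation.leibniz_pow, derivative_inv', hderiv, add_tsub_cancel_right, smul_eq_mul]
      linear_combination (m + 1) • V⁻¹ ^ (m + 1) * hVinv
    have hcoeff := congrArg (coeff (m + 1)) hexact
    rw [map_nsmul, map_sub, map_nsmul, coeff_succ_X_mul, coeff_derivative, nsmul_eq_mul,
      nsmul_eq_mul, Nat.cast_add_one] at hcoeff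
    have hzero : (m + 1 : K) * coeff (m + 1) (V⁻¹ ^ (m + 1 + 1) * d⁄dX K (X * V)) = 0 := by
      linear_combination hcoeff
    simpa [Nat.cast_add_one_ne_zero] using hzero

theorem coeff_subst_X_mul_mul_inv_pow_mul_derivative {V : K⟦X⟧} (hV : constantCoeff V ≠ 0)
    (F : K⟦X⟧) (n : ℕ) :
    coeff n (F.subst (X * V) * (V⁻¹ ^ (n + 1) * d⁄dX K (X * V))) = coeff n F := by
  have hshift : ∀ i ≤ n, (X * V) ^ i * (V⁻¹ ^ (n + 1) * d⁄dX K (X * V)) =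
      X ^ i * (V⁻¹ ^ (n - i + 1) * d⁄dX K (X * V)) := fun i hi ↦ by
    have hpow : V⁻¹ ^ (n + 1) = V⁻¹ ^ i * V⁻¹ ^ (n - i + 1) := by
      rw [← pow_add]; congr 1; omega
    rw [hpow, mul_pow, mul_assoc, ← mul_assoc (V ^ i), ← mul_assoc (V ^ i), ← mul_pow,
      PowerSeries.mul_inv_cancel V hV, one_pow, one_mul]
  obtain ⟨G, hG⟩ := X_pow_dvd_subst_sub_sum F (Y := X * V) (by simp) (n + 1)
  rw [sub_eq_iff_eq_add'.mp hG, add_mul, map_add, mul_assoc, coeff_X_pow_mul', if_neg (by omega),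
    add_zero, sum_mul, map_sum, sum_eq_single_of_mem n (self_mem_range_succ n)]
  · rw [mul_assoc, coeff_C_mul, hshift n le_rfl, coeff_X_pow_mul', if_pos le_rfl, Nat.sub_self,
      coeff_inv_pow_mul_derivative_X_mul hV, if_pos rfl, mul_one]
  · intro i hi hin
    have hi : i < n := by grind
    rw [mul_assoc, coeff_C_mul, hshift i hi.le, coeff_X_pow_mul', if_pos hi.le,
      coeff_inv_pow_mul_derivative_X_mul hV, if_neg (by omega), mul_zero]

theorem lagrange_inversion {φ T : K⟦X⟧} (hφ : constantCoeff φ ≠ 0) (hT : T = X * φ.subst T)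
    (n : ℕ) : (n + 1) • coeff (n + 1) T = coeff n (φ ^ (n + 1)) := by
  have hT0 : constantCoeff T = 0 := by rw [hT]; simp
  have hV : constantCoeff (φ.subst T) ≠ 0 := by
    obtain ⟨G, hG⟩ := X_pow_dvd_subst_sub_sum φ hT0 1
    have hconst := congrArg constantCoeff hG
    simp only [map_sub, range_one, sum_singleton, pow_zero, mul_one, pow_one, map_mul,
      constantCoeff_X, zero_mul, sub_eq_zero, constantCoeff_C] at hconst
    rwa [hconst, coeff_zero_eq_constantCoeff_apply]
  calc (n + 1) • coeff (n + 1) T = coeff n (d⁄dX K T) := by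
        rw [coeff_derivative, nsmul_eq_mul, mul_comm]; push_cast; ring
    _ = coeff n ((φ ^ (n + 1)).subst T * ((φ.subst T)⁻¹ ^ (n + 1) * d⁄dX K T)) := by
        rw [subst_pow (HasSubst.of_constantCoeff_zero' hT0), ← mul_assoc, ← mul_pow,
          PowerSeries.mul_inv_cancel _ hV, one_pow, one_mul]
    _ = coeff n (φ ^ (n + 1)) := by
        have h := coeff_subst_X_mul_mul_inv_pow_mul_derivative hV (φ ^ (n + 1)) n
        rwa [← hT] at h

end Field

theorem eq_X_mul_subst_of_coeff {R : Type*} [CommRing R] [IsDomain R] [CharZero R]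
    {φ L : R⟦X⟧} (hφ : constantCoeff φ ≠ 0) (hL0 : constantCoeff L = 0)
    (hL : ∀ n, (n + 1) • coeff (n + 1) L = coeff n (φ ^ (n + 1))) :
    L = X * φ.subst L := by
  set ι := algebraMap R (FractionRing R)
  have hι : Function.Injective ι := IsFractionRing.injective R (FractionRing R)
  have hφι : constantCoeff (map ι φ) ≠ 0 := by
    rwa [← coeff_zero_eq_constantCoeff_apply, coeff_map, coeff_zero_eq_constantCoeff_apply,
      map_ne_zero_iff ι hι]
  obtain ⟨T, hT⟩ := exists_eq_X_mul_subst hφι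
  have hLT : map ι L = T := by
    ext (_ | n)
    · rw [coeff_map, coeff_zero_eq_constantCoeff_apply, hL0, map_zero, hT]
      simp
    · refine smul_right_injective _ n.succ_ne_zero ?_
      dsimp only
      rw [lagrange_inversion hφι hT, coeff_map, ← map_nsmul, hL, ← map_pow, coeff_map]
  apply map_injective ι hι
  have hmap : map ι (φ.subst L) = (map ι φ).subst (map ι L) :=
    map_subst (HasSubst.of_constantCoeff_zero' hL0) φ
  rw [map_mul, map_X, hmap, hLT, ← hT]

end PowerSeries

namespace MvPowerSeries

variable {σ R : Type*} [CommSemiring R]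

theorem isHomogeneous_zero (p : ℕ) : (0 : MvPowerSeries σ R).IsHomogeneous p := fun h ↦ by
  simp at h

theorem isHomogeneous_one : (1 : MvPowerSeries σ R).IsHomogeneous 0 := fun {d} hd ↦ by
  classical
  rw [MvPowerSeries.coeff_one, ne_eq, ite_eq_right_iff, Classical.not_imp] at hd
  simp [hd.1]

theorem isHomogeneous_X (s : σ) : (X s : MvPowerSeries σ R).IsHomogeneous 1 := fun {d} hd ↦ by
  classical
  rw [coeff_X, ne_eq, ite_eq_right_iff, Classical.not_imp] at hd
  rw [hd.1, Finsupp.weight_single, Pi.one_apply, smul_eq_mul, mul_one]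

theorem IsHomogeneous.smul {f : MvPowerSeries σ R} {p : ℕ} (hf : f.IsHomogeneous p) (c : R) :
    (c • f).IsHomogeneous p := fun {_} hd ↦ hf (right_ne_zero_of_mul hd)

theorem IsHomogeneous.sum {ι : Type*} {s : Finset ι} {f : ι → MvPowerSeries σ R} {p : ℕ}
    (hf : ∀ i ∈ s, (f i).IsHomogeneous p) : (∑ i ∈ s, f i).IsHomogeneous p :=
  Finset.sum_induction f (IsHomogeneous · p) (fun _ _ ↦ IsHomogeneous.add)
    (isHomogeneous_zero p) hf

theorem isHomogeneous_coeff_pow {φ : PowerSeries (MvPowerSeries σ R)}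
    (hφ : ∀ n, (PowerSeries.coeff n φ).IsHomogeneous 1) (k n : ℕ) :
    (PowerSeries.coeff n (φ ^ k)).IsHomogeneous k := by
  induction k generalizing n with
  | zero =>
    rw [pow_zero, PowerSeries.coeff_one]
    split_ifs
    · exact isHomogeneous_one
    · exact isHomogeneous_zero 0
  | succ k ih =>
    rw [pow_succ, PowerSeries.coeff_mul]
    exact IsHomogeneous.sum fun _ _ ↦ IsHomogeneous.mul (ih _) (hφ _)

theorem homogeneousComponent_one (p : ℕ) :
    homogeneousComponent p (1 : MvPowerSeries σ R) = if p = 0 then 1 else 0 := by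
  classical
  ext d
  rw [coeff_homogeneousComponent, MvPowerSeries.coeff_one]
  split_ifs <;> simp_all [Finsupp.degree_eq_zero_iff, MvPowerSeries.coeff_one]

theorem homogeneousComponent_mul (f g : MvPowerSeries σ R) (p : ℕ) :
    homogeneousComponent p (f * g) =
      ∑ ab ∈ antidiagonal p, homogeneousComponent ab.1 f * homogeneousComponent ab.2 g := by
  classical
  ext d
  simp only [map_sum, coeff_mul, coeff_homogeneousComponent, ite_zero_mul_ite_zero]
  have hinner : ∀ xy ∈ antidiagonal d, (∑ ab ∈ antidiagonal p,
      if xy.1.degree = ab.1 ∧ xy.2.degree = ab.2 then coeff xy.1 f * coeff xy.2 g else 0) =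
      if d.degree = p then coeff xy.1 f * coeff xy.2 g else 0 := fun xy hxy ↦ by
    have hdeg : xy.1.degree + xy.2.degree = d.degree := by
      rw [← mem_antidiagonal.mp hxy, map_add]
    have hcond : ∀ ab : ℕ × ℕ, (xy.1.degree = ab.1 ∧ xy.2.degree = ab.2) ↔
        (xy.1.degree, xy.2.degree) = ab := fun ab ↦ by rw [Prod.ext_iff]
    simp_rw [hcond, sum_ite_eq, HasAntidiagonal.mem_antidiagonal, hdeg]
  rw [sum_comm, sum_congr rfl hinner]
  split_ifs <;> simp

/-- The substitution `tₛ ↦ X tₛ`. -/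
noncomputable def homogeneousExpansion :
    MvPowerSeries σ R →ₐ[R] PowerSeries (MvPowerSeries σ R) :=
  AlgHom.ofLinearMap
    { toFun f := PowerSeries.mk fun p ↦ homogeneousComponent p f
      map_add' f g := by ext; simp
      map_smul' c f := by ext; simp }
    (by ext p : 1; simp [homogeneousComponent_one, PowerSeries.coeff_one])
    (fun f g ↦ by ext p : 1; simp [homogeneousComponent_mul, PowerSeries.coeff_mul])

theorem coeff_homogeneousExpansion (p : ℕ) (f : MvPowerSeries σ R) :
    PowerSeries.coeff p (homogeneousExpansion f) = homogeneousComponent p f := by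
  simp [homogeneousExpansion]

theorem homogeneousExpansion_injective :
    Function.Injective (homogeneousExpansion : MvPowerSeries σ R → _) := fun f g h ↦ by
  ext d
  have hd := congrArg (fun F ↦ coeff d (PowerSeries.coeff d.degree F)) h
  simpa [coeff_homogeneousExpansion, coeff_homogeneousComponent] using hd

theorem homogeneousExpansion_of_isHomogeneous {f : MvPowerSeries σ R} {k : ℕ}
    (hf : f.IsHomogeneous k) : homogeneousExpansion f = PowerSeries.monomial k f := by
  ext p d
  rw [coeff_homogeneousExpansion, coeff_homogeneousComponent, PowerSeries.coeff_monomial]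
  split_ifs <;> simp_all [hf.coeff_eq_zero]

open WithPiTopology in
theorem coeff_homogeneousExpansion_tsum [TopologicalSpace R] [T2Space R]
    {g : ℕ → MvPowerSeries σ R} (hg : ∀ n, PowerSeries.X ^ (n + 1) ∣ homogeneousExpansion (g n))
    (p : ℕ) :
    PowerSeries.coeff p (homogeneousExpansion (∑' n, g n)) =
      ∑ n ∈ range p, PowerSeries.coeff p (homogeneousExpansion (g n)) := by
  have hvanish : ∀ d n, d.degree ≤ n → coeff d (g n) = 0 := fun d n hn ↦ by
    have hcoeff := PowerSeries.X_pow_dvd_iff.mp (hg n) d.degree (by omega)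
    simpa [coeff_homogeneousExpansion, coeff_homogeneousComponent] using
      congrArg (coeff d) hcoeff
  have hsum : Summable g := Pi.summable.mpr fun d ↦
    summable_of_ne_finset_zero (s := range d.degree) fun n hn ↦ hvanish d n (by simpa using hn)
  ext d
  simp only [coeff_homogeneousExpansion, coeff_homogeneousComponent, map_sum]
  split_ifs with hd
  · rw [hsum.map_tsum (coeff d) (continuous_coeff R d), ← hd]
    exact tsum_eq_sum fun n hn ↦ hvanish d n (by simpa using hn)
  · simp

end MvPowerSeries

/-- `φ(u) = ∑ tₙ uⁿ / n!`, so that the claim reads `I₀ = φ(I₀)`. -/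
noncomputable def varExpSeries : PowerSeries (MvPowerSeries ℕ ℝ) :=
  PowerSeries.mk fun n ↦ (n.factorial : ℝ)⁻¹ • X n

theorem coeff_varExpSeries (n : ℕ) :
    PowerSeries.coeff n varExpSeries = (n.factorial : ℝ)⁻¹ • X n :=
  PowerSeries.coeff_mk _ _

theorem I0series_eq_tsum :
    I0series = ∑' k : ℕ, ((k : ℝ) + 1)⁻¹ • PowerSeries.coeff k (varExpSeries ^ (k + 1)) := by
  simp_rw [PowerSeries.coeff_pow_eq_sum_antidiagonalTuple, coeff_varExpSeries, prod_smul]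
  rfl

theorem homogeneousExpansion_I0series_term (k : ℕ) :
    homogeneousExpansion (((k : ℝ) + 1)⁻¹ • PowerSeries.coeff k (varExpSeries ^ (k + 1))) =
      ((k : ℝ) + 1)⁻¹ •
        PowerSeries.monomial (k + 1) (PowerSeries.coeff k (varExpSeries ^ (k + 1))) := by
  have hφ (n : ℕ) : (PowerSeries.coeff n varExpSeries).IsHomogeneous 1 := by
    rw [coeff_varExpSeries]
    exact IsHomogeneous.smul (isHomogeneous_X n) _
  rw [map_smul, homogeneousExpansion_of_isHomogeneous (isHomogeneous_coeff_pow hφ _ _)]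

theorem coeff_homogeneousExpansion_I0series (p : ℕ) :
    PowerSeries.coeff p (homogeneousExpansion I0series) =
      ∑ k ∈ range p, ((k : ℝ) + 1)⁻¹ • PowerSeries.coeff p
        (PowerSeries.monomial (k + 1) (PowerSeries.coeff k (varExpSeries ^ (k + 1)))) := by
  rw [I0series_eq_tsum]
  refine (coeff_homogeneousExpansion_tsum (fun k ↦ ?_) p).trans ?_
  · rw [homogeneousExpansion_I0series_term, PowerSeries.monomial_eq_C_mul_X_pow, Algebra.smul_def]
    exact dvd_mul_of_dvd_right (dvd_mul_left _ _) _
  · simp_rw [homogeneousExpansion_I0series_term, PowerSeries.coeff_smul]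

theorem constantCoeff_homogeneousExpansion_I0series :
    PowerSeries.constantCoeff (homogeneousExpansion I0series) = 0 := by
  rw [← PowerSeries.coeff_zero_eq_constantCoeff_apply, coeff_homogeneousExpansion_I0series,
    range_zero, sum_empty]

theorem homogeneousExpansion_I0series_eq_X_mul_subst :
    homogeneousExpansion I0series =
      PowerSeries.X * varExpSeries.subst (homogeneousExpansion I0series) := by
  have := NoZeroDivisors.to_isDomain (MvPowerSeries ℕ ℝ)
  have : CharZero (MvPowerSeries ℕ ℝ) := RingHom.charZero MvPowerSeries.constantCoeff
  refine PowerSeries.eq_X_mul_subst_of_coeff ?_ constantCoeff_homogeneousExpansion_I0series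
    fun n ↦ ?_
  · rw [← PowerSeries.coeff_zero_eq_constantCoeff_apply, coeff_varExpSeries, Nat.factorial_zero,
      Nat.cast_one, inv_one, one_smul]
    intro h
    simpa using congrArg (coeff (Finsupp.single 0 1)) h
  · rw [coeff_homogeneousExpansion_I0series, sum_eq_single_of_mem n (self_mem_range_succ n)]
    · rw [PowerSeries.coeff_monomial, if_pos rfl, ← Nat.cast_smul_eq_nsmul ℝ, smul_smul]
      push_cast
      rw [mul_inv_cancel₀ (Nat.cast_add_one_ne_zero n), one_smul]
    · intro k _ hk
      rw [PowerSeries.coeff_monomial, if_neg (by omega), smul_zero]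

theorem homogeneousExpansion_smul_X_mul_I0series_pow (n : ℕ) :
    homogeneousExpansion ((n.factorial : ℝ)⁻¹ • (X n * I0series ^ n)) =
      PowerSeries.X * (PowerSeries.C (PowerSeries.coeff n varExpSeries) *
        homogeneousExpansion I0series ^ n) := by
  rw [map_smul, map_mul, map_pow, homogeneousExpansion_of_isHomogeneous (isHomogeneous_X n),
    coeff_varExpSeries, PowerSeries.monomial_eq_C_mul_X_pow, pow_one, Algebra.smul_def,
    Algebra.smul_def, map_mul, PowerSeries.algebraMap_apply]
  ring

/-- `I₀` satisfies the fixed-point equation `I₀ = ∑_{n≥0} t_n I₀^n/n!`. -/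
theorem I0series_fixed_point :
    I0series = ∑' n : ℕ, ((n.factorial : ℝ))⁻¹ •
      (MvPowerSeries.X n * I0series ^ n) := by
  apply homogeneousExpansion_injective
  ext p : 1
  calc PowerSeries.coeff p (homogeneousExpansion I0series)
      = ∑ n ∈ range p, PowerSeries.coeff p (PowerSeries.X *
          (PowerSeries.C (PowerSeries.coeff n varExpSeries) * homogeneousExpansion I0series ^ n)) :=
        PowerSeries.coeff_eq_sum_of_eq_X_mul_subst homogeneousExpansion_I0series_eq_X_mul_subst p
    _ = ∑ n ∈ range p, PowerSeries.coeff p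
          (homogeneousExpansion ((n.factorial : ℝ)⁻¹ • (X n * I0series ^ n))) := by
        simp_rw [homogeneousExpansion_smul_X_mul_I0series_pow]
    _ = _ := by
        refine (coeff_homogeneousExpansion_tsum (fun n ↦ ?_) p).symm
        have hX : PowerSeries.X ∣ homogeneousExpansion I0series :=
          PowerSeries.X_dvd_iff.mpr constantCoeff_homogeneousExpansion_I0series
        rw [homogeneousExpansion_smul_X_mul_I0series_pow, pow_succ']
        exact mul_dvd_mul_left _ (dvd_mul_of_dvd_right (pow_dvd_pow_of_dvd hX n) _)
end

section
/- Let I_0 satisfy I_0 = ∑_{n≥0} t_n I_0^n/n! and define I_k = ∑_{n≥0} t_{n+k} I_0^n/n! for k ≥ 1. Then for every k ≥ 0, t_k = ∑_{n≥0} ((-1)^n I_0^n / n!) I_{n+k}. -/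
/-!
Read `I_k = ∑ₘ t_{m+k} I₀^m / m!` as the Taylor shift of the sequence `t` by `I₀`. Taylor shifts
compose additively, `shift ψ ∘ shift φ = shift (ψ + φ)`: regroup the double series along
antidiagonals and apply the binomial theorem. The claim is `shift (-I₀) ∘ shift I₀ = shift 0 = id`.
All series converge coefficientwise since a series with zero constant term has order `≥ 1`, so its
`n`-th power has order `≥ n`.
-/

open MvPowerSeries

open Filter Finset

theorem Commute.inv_factorial_smul_add_pow {K A : Type*} [Field K] [CharZero K] [Semiring A]
    [Module K A] {x y : A} (h : Commute x y) (N : ℕ) :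
    (N.factorial : K)⁻¹ • (x + y) ^ N
      = ∑ p ∈ antidiagonal N,
          ((p.1.factorial : K)⁻¹ * (p.2.factorial : K)⁻¹) • (x ^ p.1 * y ^ p.2) := by
  rw [h.add_pow', smul_sum]
  refine sum_congr rfl fun p hp ↦ ?_
  rw [← Nat.cast_smul_eq_nsmul K, smul_smul, ← mem_antidiagonal.mp hp, Nat.cast_add_choose]
  congr 1
  field_simp [Nat.factorial_ne_zero]

theorem HasSum.sum_antidiagonal {α A : Type*} [AddCommMonoid α] [TopologicalSpace α]
    [ContinuousAdd α] [RegularSpace α] [AddCommMonoid A] [HasAntidiagonal A] {f : A × A → α}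
    {a : α} (h : HasSum f a) : HasSum (fun n ↦ ∑ p ∈ antidiagonal n, f p) a := by
  refine ((HasAntidiagonal.sigmaAntidiagonalEquivProd.hasSum_iff).2 h).sigma fun n ↦ ?_
  rw [← sum_coe_sort]
  exact hasSum_fintype _

theorem tendsto_add_cofinite_atTop : Tendsto (fun p : ℕ × ℕ ↦ p.1 + p.2) cofinite atTop :=
  tendsto_atTop.2 fun D ↦ eventually_cofinite.2 <| (Set.finite_Iic (D, D)).subset
    fun p (hp : ¬D ≤ p.1 + p.2) ↦ ⟨by omega, by omega⟩

namespace MvPowerSeries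

instance : T3Space (MvPowerSeries ℕ ℝ) := inferInstanceAs (T3Space ((ℕ →₀ ℕ) → ℝ))

instance : IsTopologicalRing (MvPowerSeries ℕ ℝ) := WithPiTopology.instIsTopologicalRing ℕ ℝ

instance : ContinuousConstSMul ℝ (MvPowerSeries ℕ ℝ) :=
  inferInstanceAs (ContinuousConstSMul ℝ ((ℕ →₀ ℕ) → ℝ))

variable {φ ψ : MvPowerSeries ℕ ℝ}

theorem summable_of_tendsto_of_le_order {ι : Type*} {f : ι → MvPowerSeries ℕ ℝ} {ν : ι → ℕ}
    (hν : Tendsto ν cofinite atTop) (hf : ∀ i, (ν i : ℕ∞) ≤ (f i).order) : Summable f := by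
  refine Pi.summable.2 fun d ↦ summable_of_hasFiniteSupport <|
    (eventually_cofinite.1 (hν.eventually_gt_atTop d.degree)).subset fun i hi hlt ↦ hi ?_
  exact coeff_of_lt_order ((Nat.cast_lt.2 hlt).trans_le (hf i))

theorem natCast_le_order_smul_mul_pow (hφ : constantCoeff φ = 0) (c : ℝ) (x : MvPowerSeries ℕ ℝ)
    (m : ℕ) : (m : ℕ∞) ≤ (c • (x * φ ^ m)).order :=
  le_order_smul.trans' <|
    (le_order_pow_of_constantCoeff_eq_zero m hφ).trans <| le_add_self.trans le_order_mul

noncomputable def taylorShift (φ : MvPowerSeries ℕ ℝ) (a : ℕ → MvPowerSeries ℕ ℝ) (k : ℕ) :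
    MvPowerSeries ℕ ℝ :=
  ∑' m, (m.factorial : ℝ)⁻¹ • (a (m + k) * φ ^ m)

theorem hasSum_taylorShift (hφ : constantCoeff φ = 0) (a : ℕ → MvPowerSeries ℕ ℝ) (k : ℕ) :
    HasSum (fun m ↦ (m.factorial : ℝ)⁻¹ • (a (m + k) * φ ^ m)) (taylorShift φ a k) :=
  (summable_of_tendsto_of_le_order (Nat.cofinite_eq_atTop ▸ tendsto_id) fun m ↦
    natCast_le_order_smul_mul_pow hφ _ _ m).hasSum

@[simp]
theorem taylorShift_zero (a : ℕ → MvPowerSeries ℕ ℝ) : taylorShift 0 a = a := by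
  ext1 k
  rw [taylorShift, tsum_eq_single 0 fun m hm ↦ by simp [zero_pow hm]]
  simp

theorem taylorShift_taylorShift (hφ : constantCoeff φ = 0) (hψ : constantCoeff ψ = 0)
    (a : ℕ → MvPowerSeries ℕ ℝ) : taylorShift ψ (taylorShift φ a) = taylorShift (ψ + φ) a := by
  ext1 k
  set f : ℕ × ℕ → MvPowerSeries ℕ ℝ :=
    fun p ↦ (p.1.factorial : ℝ)⁻¹ •
      ((p.2.factorial : ℝ)⁻¹ • (a (p.2 + (p.1 + k)) * φ ^ p.2) * ψ ^ p.1)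
  have hf : Summable f := summable_of_tendsto_of_le_order tendsto_add_cofinite_atTop fun p ↦ by
    calc ((p.1 + p.2 : ℕ) : ℕ∞) = p.2 + p.1 := by push_cast; ring
      _ ≤ _ := add_le_add (natCast_le_order_smul_mul_pow hφ _ _ _)
          (le_order_pow_of_constantCoeff_eq_zero _ hψ)
      _ ≤ _ := le_order_mul
      _ ≤ _ := le_order_smul
  have hfiber : ∀ n, HasSum (fun m ↦ f (n, m))
      ((n.factorial : ℝ)⁻¹ • (taylorShift φ a (n + k) * ψ ^ n)) := fun n ↦
    ((hasSum_taylorShift hφ a (n + k)).mul_right _).const_smul _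
  have hantidiagonal : ∀ N,
      ∑ p ∈ antidiagonal N, f p = (N.factorial : ℝ)⁻¹ • (a (N + k) * (ψ + φ) ^ N) := by
    intro N
    rw [← mul_smul_comm, (Commute.all ψ φ).inv_factorial_smul_add_pow, mul_sum]
    refine sum_congr rfl fun p hp ↦ ?_
    rw [← mem_antidiagonal.mp hp]
    simp only [f, smul_mul_assoc, mul_smul_comm, smul_smul]
    rw [add_left_comm, ← add_assoc, mul_assoc, mul_comm (φ ^ p.2)]
  have hshift : HasSum (fun N ↦ ∑ p ∈ antidiagonal N, f p) (taylorShift (ψ + φ) a k) := by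
    simpa only [hantidiagonal] using hasSum_taylorShift (by simp [hφ, hψ]) a k
  exact (hf.hasSum.prod_fiberwise hfiber).tsum_eq.trans (hf.hasSum.sum_antidiagonal.unique hshift)

end MvPowerSeries

theorem t_in_terms_of_I_general (I0 : MvPowerSeries ℕ ℝ)
    (hc : MvPowerSeries.constantCoeff (σ := ℕ) (R := ℝ) I0 = 0)
    (I : ℕ → MvPowerSeries ℕ ℝ)
    (hI : ∀ k, I k = ∑' n : ℕ, ((n.factorial : ℝ))⁻¹ •
        (MvPowerSeries.X (n + k) * I0 ^ n)) :
    ∀ k : ℕ, MvPowerSeries.X k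
      = ∑' n : ℕ, ((-1 : ℝ) ^ n * ((n.factorial : ℝ))⁻¹) • (I0 ^ n * I (n + k)) := by
  have hinv : taylorShift (-I0) I = X := by
    have hI_eq : I = taylorShift I0 X := funext hI
    rw [hI_eq, taylorShift_taylorShift hc (by simp [hc]), neg_add_cancel, taylorShift_zero]
  intro k
  rw [← congrFun hinv k, taylorShift]
  refine tsum_congr fun n ↦ ?_
  rw [neg_pow, mul_comm, mul_assoc, mul_smul, ← neg_one_smul ℝ (1 : MvPowerSeries ℕ ℝ), smul_pow,
    one_pow, smul_one_mul, smul_comm]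

/-- If `I₀` is the (unique, zero-constant-term) solution of
`I₀ = ∑_{n≥0} t_n I₀^n/n!` and `I_k = ∑_{n≥0} t_{n+k} I₀^n/n!` for `k ≥ 1`
(the formula also recovers `I₀` at `k = 0`), then
`t_k = ∑_{n≥0} ((-1)^n I₀^n/n!) I_{n+k}` for every `k ≥ 0`. -/
theorem t_in_terms_of_I (I0 : MvPowerSeries ℕ ℝ)
    (hc : MvPowerSeries.constantCoeff (σ := ℕ) (R := ℝ) I0 = 0)
    (hfix : I0 = ∑' n : ℕ, ((n.factorial : ℝ))⁻¹ • (MvPowerSeries.X n * I0 ^ n))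
    (I : ℕ → MvPowerSeries ℕ ℝ)
    (hI : ∀ k, I k = ∑' n : ℕ, ((n.factorial : ℝ))⁻¹ •
        (MvPowerSeries.X (n + k) * I0 ^ n)) :
    ∀ k : ℕ, MvPowerSeries.X k
      = ∑' n : ℕ, ((-1 : ℝ) ^ n * ((n.factorial : ℝ))⁻¹) • (I0 ^ n * I (n + k)) :=
  t_in_terms_of_I_general I0 hc I hI
end

section
/- With I_0 the fixed point of I_0 = ∑_{n≥0} t_n I_0^n/n! and I_k = ∑_{n≥0} t_{n+k} I_0^n/n!, the identity ∑_{n≥0} (t_n − δ_{n,1}) I_0^{n+1}/(n+1)! = ∑_{k≥0} ((-1)^k/(k+1)!) (I_k + δ_{k,1}) I_0^{k+1} holds as formal power series. -/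
/-!
All series converge coefficientwise because their `n`-th terms have order at least `n`, so the
identity can be checked on the coefficient of a monomial `d`, where every sum stops at
`deg d + 1`. Expanding `I_k I₀^(k+1) = ∑ₙ t_(n+k) I₀^(n+k+1) / n!` and collecting the
coefficient of `t_m I₀^(m+1)` on the right-hand side leaves
`∑_{k ≤ m} (-1)^k / ((k+1)! (m-k)!) = 1/(m+1)!`, i.e. `∑_{j=1}^{m+1} (-1)^(j-1) C(m+1, j) = 1`.
The two Kronecker terms both contribute `-I₀²/2`.
-/

open MvPowerSeries

open Finset Nat

namespace MvPowerSeries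

section Order

variable {σ R : Type*} [Semiring R]

theorem natCast_le_order_mul_pow {f : MvPowerSeries σ R} (hf : constantCoeff f = 0)
    (g : MvPowerSeries σ R) {m n : ℕ} (hmn : m ≤ n) : (m : ℕ∞) ≤ (g * f ^ n).order :=
  calc (m : ℕ∞) ≤ n := by exact_mod_cast hmn
    _ ≤ (f ^ n).order := le_order_pow_of_constantCoeff_eq_zero n hf
    _ ≤ g.order + (f ^ n).order := le_add_self
    _ ≤ (g * f ^ n).order := le_order_mul

theorem natCast_le_order_smul_mul_pow_s7 {f : MvPowerSeries σ R} (hf : constantCoeff f = 0)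
    (c : R) (g : MvPowerSeries σ R) {m n : ℕ} (hmn : m ≤ n) :
    (m : ℕ∞) ≤ (c • (g * f ^ n)).order :=
  (natCast_le_order_mul_pow hf g hmn).trans le_order_smul

end Order

namespace WithPiTopology

open scoped MvPowerSeries.WithPiTopology

section Semiring

variable {σ R : Type*} [Semiring R] [TopologicalSpace R]

theorem summable_of_natCast_le_order {f : ℕ → MvPowerSeries σ R}
    (hf : ∀ n : ℕ, (n : ℕ∞) ≤ (f n).order) : Summable f :=
  summable_iff_summable_coeff.mpr fun d ↦
    summable_of_ne_finset_zero (s := range (d.degree + 1)) fun n hn ↦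
      coeff_of_lt_order <| (Nat.cast_lt.mpr (by simpa using hn)).trans_le (hf n)

theorem coeff_tsum_eq_sum_range [T2Space R] {f : ℕ → MvPowerSeries σ R}
    (hf : ∀ n : ℕ, (n : ℕ∞) ≤ (f n).order) {d : σ →₀ ℕ} {M : ℕ} (hM : d.degree < M) :
    coeff d (∑' n, f n) = ∑ n ∈ range M, coeff d (f n) := by
  rw [← (hasSum_iff_hasSum_coeff.mp (summable_of_natCast_le_order hf).hasSum d).tsum_eq]
  exact tsum_eq_sum fun n hn ↦ coeff_of_lt_order <|
    (Nat.cast_lt.mpr (hM.trans_le (by simpa using hn))).trans_le (hf n)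

end Semiring

section CommSemiring

variable {σ R : Type*} [CommSemiring R] [TopologicalSpace R] [IsTopologicalSemiring R]
  [T2Space R] {f : MvPowerSeries σ R}

theorem tsum_smul_mul_pow_mul_pow (hf : constantCoeff f = 0) (c : ℕ → R)
    (g : ℕ → MvPowerSeries σ R) (j : ℕ) :
    (∑' n, c n • (g n * f ^ n)) * f ^ j = ∑' n, c n • (g n * f ^ (n + j)) := by
  have hsum : Summable fun n ↦ c n • (g n * f ^ n) := summable_of_natCast_le_order fun n ↦
    natCast_le_order_smul_mul_pow_s7 hf (c n) (g n) le_rfl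
  rw [← hsum.tsum_mul_right]
  simp only [smul_mul_assoc, mul_assoc, pow_add]

theorem coeff_tsum_smul_mul_pow_mul_pow (hf : constantCoeff f = 0) (c : ℕ → R)
    (g : ℕ → MvPowerSeries σ R) (j : ℕ) {d : σ →₀ ℕ} {M : ℕ} (hM : d.degree < M) :
    coeff d ((∑' n, c n • (g n * f ^ n)) * f ^ j)
      = ∑ n ∈ range M, c n * coeff d (g n * f ^ (n + j)) := by
  rw [tsum_smul_mul_pow_mul_pow hf, coeff_tsum_eq_sum_range (fun n ↦
    natCast_le_order_smul_mul_pow_s7 hf (c n) (g n) (n.le_add_right j)) hM]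
  simp only [coeff_smul]

end CommSemiring

end WithPiTopology

end MvPowerSeries

theorem Int.alternating_sum_range_choose_succ (m : ℕ) :
    ∑ k ∈ Finset.range (m + 1), ((-1) ^ k * (m + 1).choose (k + 1) : ℤ) = 1 := by
  have h := Int.alternating_sum_range_choose_of_ne m.succ_ne_zero
  rw [sum_range_succ'] at h
  simp only [pow_succ, mul_neg_one, neg_mul, sum_neg_distrib, pow_zero, choose_zero_right,
    Nat.cast_one, mul_one] at h
  linarith

section Field

variable {K : Type*} [Field K] [CharZero K]

theorem sum_range_neg_one_pow_mul_inv_factorial_mul_inv_factorial (m : ℕ) :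
    ∑ k ∈ range (m + 1), (-1 : K) ^ k * ((k + 1)! : K)⁻¹ * ((m - k)! : K)⁻¹
      = ((m + 1)! : K)⁻¹ := by
  have hchoose : ∀ k ∈ range (m + 1),
      (-1 : K) ^ k * ((k + 1)! : K)⁻¹ * ((m - k)! : K)⁻¹
        = ((-1) ^ k * (m + 1).choose (k + 1) : ℤ) * ((m + 1)! : K)⁻¹ := by
    intro k hk
    have hkm : k + 1 ≤ m + 1 := by simpa using hk
    have : ((m + 1)! : K) ≠ 0 := Nat.cast_ne_zero.mpr (factorial_ne_zero _)
    push_cast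
    rw [Nat.cast_choose K hkm, Nat.add_sub_add_right]
    field_simp
  rw [sum_congr rfl hchoose, ← sum_mul, ← Int.cast_sum, Int.alternating_sum_range_choose_succ,
    Int.cast_one, one_mul]

theorem sum_range_neg_one_pow_mul_sum_range_shift {M : ℕ} {a : ℕ → K}
    (ha : ∀ m, M ≤ m → a m = 0) :
    ∑ k ∈ range M, (-1) ^ k * ((k + 1)! : K)⁻¹ * ∑ n ∈ range M, (n ! : K)⁻¹ * a (n + k)
      = ∑ m ∈ range M, ((m + 1)! : K)⁻¹ * a m := by
  set c : ℕ → K := fun k ↦ (-1) ^ k * ((k + 1)! : K)⁻¹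
  calc ∑ k ∈ range M, c k * ∑ n ∈ range M, (n ! : K)⁻¹ * a (n + k)
      = ∑ k ∈ range M, ∑ n ∈ range (M - k), c k * ((n ! : K)⁻¹ * a (n + k)) := by
        refine sum_congr rfl fun k _ ↦ ?_
        rw [mul_sum]
        refine (sum_subset (range_subset_range.mpr (M.sub_le k)) fun n hn hn' ↦ ?_).symm
        simp only [mem_range] at hn hn'
        rw [ha (n + k) (by omega), mul_zero, mul_zero]
    _ = ∑ m ∈ range M, ∑ k ∈ range (m + 1), c k * (((m - k)! : K)⁻¹ * a (m - k + k)) :=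
        (sum_range_diag_flip M fun k n ↦ c k * ((n ! : K)⁻¹ * a (n + k))).symm
    _ = ∑ m ∈ range M, (∑ k ∈ range (m + 1), c k * ((m - k)! : K)⁻¹) * a m := by
        refine sum_congr rfl fun m _ ↦ ?_
        rw [sum_mul]
        refine sum_congr rfl fun k hk ↦ ?_
        rw [Nat.sub_add_cancel (Nat.lt_succ_iff.mp (mem_range.mp hk))]
        ring
    _ = ∑ m ∈ range M, ((m + 1)! : K)⁻¹ * a m := by
        simp only [c, sum_range_neg_one_pow_mul_inv_factorial_mul_inv_factorial]

end Field

theorem action_value_in_I_general (I0 : MvPowerSeries ℕ ℝ)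
    (hc : MvPowerSeries.constantCoeff I0 = 0)
    (I : ℕ → MvPowerSeries ℕ ℝ)
    (hI : ∀ k, I k = ∑' n : ℕ, ((n.factorial : ℝ))⁻¹ •
        (MvPowerSeries.X (n + k) * I0 ^ n)) :
    ∑' n : ℕ, (((n + 1).factorial : ℝ))⁻¹ •
        ((MvPowerSeries.X n - if n = 1 then 1 else 0) * I0 ^ (n + 1))
      = ∑' k : ℕ, ((-1 : ℝ) ^ k * (((k + 1).factorial : ℝ))⁻¹) •
          ((I k + if k = 1 then 1 else 0) * I0 ^ (k + 1)) := by
  ext d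
  have hM : d.degree < d.degree + 1 := d.degree.lt_succ_self
  -- The instance above equals the `WithPiTopology` one only after unfolding, so `rw` cannot
  -- apply the `WithPiTopology` lemmas here, while unification through `trans` can.
  refine (WithPiTopology.coeff_tsum_eq_sum_range
      (fun n ↦ natCast_le_order_smul_mul_pow_s7 hc _ _ (n.le_add_right 1)) hM).trans
    (.trans ?_ (WithPiTopology.coeff_tsum_eq_sum_range
      (fun k ↦ natCast_le_order_smul_mul_pow_s7 hc _ _ (k.le_add_right 1)) hM).symm)
  set a : ℕ → ℝ := fun m ↦ coeff d (X m * I0 ^ (m + 1))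
  have hIk (k : ℕ) :
      coeff d (I k * I0 ^ (k + 1)) = ∑ n ∈ range (d.degree + 1), (n ! : ℝ)⁻¹ * a (n + k) := by
    rw [hI k]
    refine (WithPiTopology.coeff_tsum_smul_mul_pow_mul_pow hc _ _ _ hM).trans ?_
    simp only [a, add_assoc]
  have hδ (n : ℕ) : coeff d ((if n = 1 then 1 else 0) * I0 ^ (n + 1))
      = if n = 1 then coeff d (I0 ^ 2) else 0 := by
    split_ifs with h <;> simp [h]
  simp only [coeff_smul, sub_mul, add_mul, map_sub, map_add, hIk, hδ, mul_sub,
    mul_add, sum_sub_distrib, sum_add_distrib, mul_ite, mul_zero, sum_ite_eq']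
  rw [sum_range_neg_one_pow_mul_sum_range_shift (a := a) fun m hm ↦ coeff_of_lt_order <|
    (Nat.cast_lt.mpr (by omega)).trans_le (natCast_le_order_mul_pow hc _ le_rfl)]
  split_ifs <;> norm_num [a, sub_eq_add_neg]

/-- With `I₀` the fixed point of `I₀ = ∑ t_n I₀^n/n!` and
`I_k = ∑_{n≥0} t_{n+k} I₀^n/n!`, one has
`∑_{n≥0} (t_n − δ_{n,1}) I₀^{n+1}/(n+1)! = ∑_{k≥0} ((−1)^k/(k+1)!) (I_k + δ_{k,1}) I₀^{k+1}`. -/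
theorem action_value_in_I (I0 : MvPowerSeries ℕ ℝ)
    (hc : MvPowerSeries.constantCoeff I0 = 0)
    (hfix : I0 = ∑' n : ℕ, ((n.factorial : ℝ))⁻¹ • (MvPowerSeries.X n * I0 ^ n))
    (I : ℕ → MvPowerSeries ℕ ℝ)
    (hI : ∀ k, I k = ∑' n : ℕ, ((n.factorial : ℝ))⁻¹ •
        (MvPowerSeries.X (n + k) * I0 ^ n)) :
    ∑' n : ℕ, (((n + 1).factorial : ℝ))⁻¹ •
        ((MvPowerSeries.X n - if n = 1 then 1 else 0) * I0 ^ (n + 1))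
      = ∑' k : ℕ, ((-1 : ℝ) ^ k * (((k + 1).factorial : ℝ))⁻¹) •
          ((I k + if k = 1 then 1 else 0) * I0 ^ (k + 1)) :=
  action_value_in_I_general I0 hc I hI
end

section
/- With I_0 and I_k as above, the partial derivative of I_0 with respect to t_k satisfies ∂I_0/∂t_k = (1/(1−I_1)) · I_0^k/k!, as an identity of formal power series. -/
/-!
Differentiate the fixed-point equation `I₀ = ∑ tₙ I₀ⁿ/n!` term by term: `∂/∂t_k` is continuous
for the coefficientwise topology, and the series converges there because its `n`-th term has
order at least `n`. The term `t_k` contributes `I₀ᵏ/k!`, and the chain rule turns the rest into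
`∑ tₙ₊₁ I₀ⁿ/n! · ∂I₀ = I₁ · ∂I₀`. Hence `(1 - I₁) · ∂I₀ = I₀ᵏ/k!`, and `1 - I₁` is invertible
because `I₁` has no constant term.
-/

open MvPowerSeries

/-- Formal partial derivative `∂/∂t_k` of a multivariate formal power series. -/
noncomputable def pderivMv (k : ℕ) (f : MvPowerSeries ℕ ℝ) : MvPowerSeries ℕ ℝ :=
  fun d => ((d k : ℝ) + 1) * MvPowerSeries.coeff (d + Finsupp.single k 1) f

open scoped Nat

namespace MvPowerSeries

variable {σ R : Type*}

theorem pderiv_smul_X_mul [CommSemiring R] [DecidableEq σ] (i j : σ) (c : R)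
    (f : MvPowerSeries σ R) :
    pderiv R i (c • (X j * f)) = (if j = i then c • f else 0) + c • (X j * pderiv R i f) := by
  rw [Derivation.map_smul, Derivation.leibniz, smul_add, add_comm]
  by_cases h : j = i
  · subst h
    simp
  · simp [h]

namespace WithPiTopology

open scoped MvPowerSeries.WithPiTopology

theorem continuous_pderiv [CommSemiring R] [TopologicalSpace R] [IsTopologicalSemiring R]
    (i : σ) : Continuous (pderiv R i) :=
  continuous_pi fun d =>
    ((continuous_coeff R (d + Finsupp.single i 1)).mul_const _).congr fun f =>
      (coeff_pderiv f d).symm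

theorem summable_smul_mul_pow [CommSemiring R] [TopologicalSpace R] {g : MvPowerSeries σ R}
    (hg : constantCoeff g = 0) (c : ℕ → R) (h : ℕ → MvPowerSeries σ R) :
    Summable fun n => c n • (h n * g ^ n) := by
  refine summable_of_tendsto_order_atTop_nhds_top <| tendsto_nhds_top_mono
    ENat.tendsto_natCast_nhds_top <| Filter.Eventually.of_forall fun n => ?_
  calc (n : ℕ∞) ≤ (g ^ n).order := le_order_pow_of_constantCoeff_eq_zero n hg
    _ ≤ (h n).order + (g ^ n).order := le_add_self
    _ ≤ (h n * g ^ n).order := le_order_mul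
    _ ≤ (c n • (h n * g ^ n)).order := le_order_smul

theorem hasSum_smul_mul_pderiv_pow [Field R] [CharZero R] [TopologicalSpace R]
    [IsTopologicalRing R] {g S : MvPowerSeries σ R} (h : ℕ → MvPowerSeries σ R) (i : σ)
    (hS : HasSum (fun n => (n ! : R)⁻¹ • (h (n + 1) * g ^ n)) S) :
    HasSum (fun n => (n ! : R)⁻¹ • (h n * pderiv R i (g ^ n))) (S * pderiv R i g) := by
  have hterm (n : ℕ) : ((n + 1)! : R)⁻¹ • (h (n + 1) * pderiv R i (g ^ (n + 1)))
      = (n ! : R)⁻¹ • (h (n + 1) * g ^ n) * pderiv R i g := by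
    have hcoeff : ((n + 1)! : R)⁻¹ * (n + 1 : ℕ) = (n ! : R)⁻¹ := by
      rw [Nat.factorial_succ, Nat.cast_mul, mul_inv, mul_right_comm,
        inv_mul_cancel₀ (Nat.cast_ne_zero.mpr n.succ_ne_zero), one_mul]
    rw [Derivation.leibniz_pow, Nat.add_sub_cancel, ← Nat.cast_smul_eq_nsmul R, mul_smul_comm,
      smul_smul, hcoeff, smul_eq_mul, smul_mul_assoc, mul_assoc]
  rw [← hasSum_nat_add_iff' 1]
  simpa only [hterm, Finset.sum_range_one, pow_zero, Derivation.map_one_eq_zero, mul_zero,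
    smul_zero, sub_zero] using hS.mul_right (pderiv R i g)

end WithPiTopology

end MvPowerSeries

-- The topology on `MvPowerSeries ℕ ℝ` declared above is that of `MvPowerSeries.WithPiTopology`.
instance : IsTopologicalRing (MvPowerSeries ℕ ℝ) :=
  MvPowerSeries.WithPiTopology.instIsTopologicalRing ℕ ℝ

instance : T2Space (MvPowerSeries ℕ ℝ) :=
  MvPowerSeries.WithPiTopology.instT2Space

open MvPowerSeries.WithPiTopology

theorem pderivMv_eq_pderiv (k : ℕ) : pderivMv k = pderiv ℝ k := by
  ext f d
  rw [coeff_pderiv, mul_comm]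
  rfl

/-- `∂I₀/∂t_k = (1/(1−I₁)) · I₀^k/k!`. -/
theorem pderiv_I0 (I0 : MvPowerSeries ℕ ℝ)
    (hc : MvPowerSeries.constantCoeff I0 = 0)
    (hfix : I0 = ∑' n : ℕ, ((n.factorial : ℝ))⁻¹ • (MvPowerSeries.X n * I0 ^ n))
    (I : ℕ → MvPowerSeries ℕ ℝ)
    (hI : ∀ k, I k = ∑' n : ℕ, ((n.factorial : ℝ))⁻¹ •
        (MvPowerSeries.X (n + k) * I0 ^ n)) :
    ∀ k : ℕ, pderivMv k I0 = (1 - I 1)⁻¹ * (((k.factorial : ℝ))⁻¹ • I0 ^ k) := by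
  intro k
  have hI0 : HasSum (fun n => (n ! : ℝ)⁻¹ • (X n * I0 ^ n)) I0 :=
    (summable_smul_mul_pow hc _ X).hasSum_iff.mpr hfix.symm
  have hI1 : HasSum (fun n => (n ! : ℝ)⁻¹ • (X (n + 1) * I0 ^ n)) (I 1) :=
    (summable_smul_mul_pow hc _ (fun n => X (n + 1))).hasSum_iff.mpr (hI 1).symm
  have hderiv : HasSum (fun n => pderiv ℝ k ((n ! : ℝ)⁻¹ • (X n * I0 ^ n)))
      ((k ! : ℝ)⁻¹ • I0 ^ k + I 1 * pderiv ℝ k I0) := by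
    simp only [pderiv_smul_X_mul]
    convert (hasSum_ite_eq k ((k ! : ℝ)⁻¹ • I0 ^ k)).add
      (hasSum_smul_mul_pderiv_pow X k hI1) using 1
    funext n
    split_ifs with h
    · subst h
      rfl
    · rfl
  have hkey : pderiv ℝ k I0 * (1 - I 1) = (k ! : ℝ)⁻¹ • I0 ^ k := by
    linear_combination (hI0.map (pderiv ℝ k) (continuous_pderiv k)).unique hderiv
  have hI1_const : constantCoeff (I 1) = 0 := by
    have h := hI1.map constantCoeff (continuous_constantCoeff ℝ)
    simp only [Function.comp_def, constantCoeff_smul, map_mul, constantCoeff_X, zero_mul,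
      smul_eq_mul, mul_zero] at h
    exact h.unique hasSum_zero
  rw [pderivMv_eq_pderiv, mul_comm, MvPowerSeries.eq_mul_inv_iff_mul_eq (by simp [hI1_const])]
  exact hkey
end

section
/- The formal power series I_0 satisfies ∂I_0/∂t_0 = 1 + ∑_{k≥1} ∑_{p_1+⋯+p_k = k} (t_{p_1}/p_1!)⋯(t_{p_k}/p_k!). -/
/-!
The `k`-th summand of `I₀` is homogeneous of degree `k + 1`, so the series converges
coefficientwise and `∂/∂t₀` may be taken termwise. The `t_j`-derivative of `∏ t_{p_i}/p_i!` is
`1/j!` times the sum, over the parts `p_i = j`, of the same product with that part deleted.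
Conversely a tuple `q` of length `k` with sum `k` arises from `k + 1` tuples of length `k + 1`
with sum `k`, one for each position at which a zero part can be inserted; this factor cancels the
`1/(k+1)` of `I₀`. Hence `∂I₀/∂t₀ = ∑_{k ≥ 0} ∑_{q₁+⋯+q_k=k} ∏ t_{q_i}/q_i!`, whose `k = 0`
term (the empty product) is the `1`.
-/

open MvPowerSeries

open Finset

/- Mathlib's `MvPowerSeries.WithPiTopology` instances are stated for its scoped topology, which
does not unify with the instance above. -/
instance inst_s11 : T2Space (MvPowerSeries ℕ ℝ) :=
  inferInstanceAs (T2Space ((ℕ →₀ ℕ) → ℝ))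

instance : IsTopologicalAddGroup (MvPowerSeries ℕ ℝ) :=
  inferInstanceAs (IsTopologicalAddGroup ((ℕ →₀ ℕ) → ℝ))

@[simp]
theorem coeff_pderivMv (k : ℕ) (f : MvPowerSeries ℕ ℝ) (d : ℕ →₀ ℕ) :
    coeff d (pderivMv k f) = ((d k : ℝ) + 1) * coeff (d + Finsupp.single k 1) f :=
  rfl

noncomputable def pderivMvₗ (k : ℕ) : MvPowerSeries ℕ ℝ →ₗ[ℝ] MvPowerSeries ℕ ℝ where
  toFun := pderivMv k
  map_add' f g := by ext d; simp [mul_add]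
  map_smul' c f := by ext d; simp [mul_left_comm]

theorem pderivMv_smul (k : ℕ) (c : ℝ) (f : MvPowerSeries ℕ ℝ) :
    pderivMv k (c • f) = c • pderivMv k f :=
  map_smul (pderivMvₗ k) c f

theorem pderivMv_sum {ι : Type*} (k : ℕ) (s : Finset ι) (f : ι → MvPowerSeries ℕ ℝ) :
    pderivMv k (∑ i ∈ s, f i) = ∑ i ∈ s, pderivMv k (f i) :=
  map_sum (pderivMvₗ k) f s

theorem hasSum_pderivMv {ι : Type*} (k : ℕ) {f : ι → MvPowerSeries ℕ ℝ}
    {a : MvPowerSeries ℕ ℝ} (hf : HasSum f a) :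
    HasSum (fun i => pderivMv k (f i)) (pderivMv k a) :=
  Pi.hasSum.2 fun d => (Pi.hasSum.1 hf (d + Finsupp.single k 1)).mul_left _

theorem pderivMv_monomial (k : ℕ) (e : ℕ →₀ ℕ) (a : ℝ) :
    pderivMv k (monomial e a) = (e k : ℝ) • monomial (e - Finsupp.single k 1) a := by
  ext d
  rcases Nat.eq_zero_or_pos (e k) with hek | hek
  · have : d + Finsupp.single k 1 ≠ e := fun h => by simp [← h] at hek
    simp [coeff_monomial, this, hek]
  · obtain ⟨e', rfl⟩ : ∃ e', e = e' + Finsupp.single k 1 :=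
      ⟨e - Finsupp.single k 1, (tsub_add_cancel_of_le (Finsupp.single_le_iff.2 hek)).symm⟩
    by_cases hd : d = e' <;> simp [coeff_monomial, hd]

noncomputable def tupleMonomial {n : ℕ} (p : Fin n → ℕ) : MvPowerSeries ℕ ℝ :=
  (∏ i, ((p i).factorial : ℝ)⁻¹) • ∏ i, X (p i)

noncomputable def tupleSum (n m : ℕ) : MvPowerSeries ℕ ℝ :=
  ∑ p ∈ Nat.antidiagonalTuple n m, tupleMonomial p

theorem tupleMonomial_eq_monomial {n : ℕ} (p : Fin n → ℕ) :
    tupleMonomial p =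
      monomial (∑ i, Finsupp.single (p i) 1) (∏ i, ((p i).factorial : ℝ)⁻¹) := by
  simp only [tupleMonomial, X, prod_monomial, prod_const_one]
  rw [← map_smul, smul_eq_mul, mul_one]

theorem coeff_tupleSum_of_degree_ne {n m : ℕ} {d : ℕ →₀ ℕ} (hd : d.degree ≠ n) :
    coeff d (tupleSum n m) = 0 := by
  refine map_sum (coeff d) _ _ |>.trans (sum_eq_zero fun p _ => ?_)
  rw [tupleMonomial_eq_monomial, coeff_monomial, if_neg]
  rintro rfl
  simp [map_sum] at hd

theorem summable_smul_tupleSum {len m : ℕ → ℕ} (hlen : Function.Injective len) (c : ℕ → ℝ) :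
    Summable fun k => c k • tupleSum (len k) (m k) := by
  refine Pi.summable.2 fun d => summable_of_hasFiniteSupport ?_
  refine ((Set.finite_singleton d.degree).preimage hlen.injOn).subset fun k hk => ?_
  by_contra hne
  refine hk (?_ : coeff d (c k • tupleSum (len k) (m k)) = 0)
  rw [coeff_smul, coeff_tupleSum_of_degree_ne (Ne.symm hne), mul_zero]

theorem pderivMv_tupleMonomial {n : ℕ} (j : ℕ) (p : Fin (n + 1) → ℕ) :
    pderivMv j (tupleMonomial p) =
      (j.factorial : ℝ)⁻¹ • ∑ i ∈ univ.filter (p · = j), tupleMonomial (Fin.removeNth i p) := by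
  set e := ∑ i, Finsupp.single (p i) 1
  set c := ∏ i, ((p i).factorial : ℝ)⁻¹
  have hremove : ∀ i ∈ univ.filter (p · = j),
      (j.factorial : ℝ)⁻¹ • tupleMonomial (Fin.removeNth i p) =
        monomial (e - Finsupp.single j 1) c := by
    intro i hi
    rw [mem_filter] at hi
    have he : Finsupp.single j 1 + ∑ k, Finsupp.single (Fin.removeNth i p k) 1 = e := by
      rw [← hi.2]; exact Fin.add_sum_removeNth i fun k => Finsupp.single (p k) 1
    have hc : (j.factorial : ℝ)⁻¹ * ∏ k, ((Fin.removeNth i p k).factorial : ℝ)⁻¹ = c := by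
      rw [← hi.2]; exact Fin.mul_prod_removeNth i fun k => ((p k).factorial : ℝ)⁻¹
    rw [tupleMonomial_eq_monomial, ← map_smul, smul_eq_mul, hc, ← he, add_tsub_cancel_left]
  have hcount : (e j : ℝ) = #(univ.filter (p · = j)) := by
    simp [e, Finsupp.finsetSum_apply, Finsupp.single_apply]
  rw [smul_sum, sum_congr rfl hremove, sum_const, ← Nat.cast_smul_eq_nsmul ℝ, ← hcount,
    ← pderivMv_monomial, tupleMonomial_eq_monomial]

theorem sum_filter_antidiagonalTuple_removeNth {M : Type*} [AddCommMonoid M] {n : ℕ}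
    (i : Fin (n + 1)) (j m : ℕ) (f : (Fin n → ℕ) → M) :
    ∑ p ∈ (Nat.antidiagonalTuple (n + 1) (j + m)).filter (· i = j), f (Fin.removeNth i p) =
      ∑ q ∈ Nat.antidiagonalTuple n m, f q := by
  refine sum_nbij' (Fin.removeNth i) (fun q => Fin.insertNth i j q) ?_ ?_ ?_ ?_ fun _ _ => rfl
  · intro p hp
    simp only [mem_filter, Nat.mem_antidiagonalTuple] at hp ⊢
    rw [← Fin.add_sum_removeNth i, hp.2] at hp
    omega
  · intro q hq
    simp_all [Nat.mem_antidiagonalTuple]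
  · intro p hp
    simp only [mem_filter] at hp
    rw [← hp.2, Fin.insertNth_self_removeNth]
  · intro q _
    exact Fin.removeNth_insertNth (α := fun _ => ℕ) i j q

theorem pderivMv_tupleSum (j n m : ℕ) :
    pderivMv j (tupleSum (n + 1) (j + m)) = (((n : ℝ) + 1) / j.factorial) • tupleSum n m := by
  simp only [tupleSum, pderivMv_sum, pderivMv_tupleMonomial, ← smul_sum, sum_filter]
  rw [sum_comm]
  simp only [← sum_filter, sum_filter_antidiagonalTuple_removeNth, sum_const, card_univ,
    Fintype.card_fin, ← Nat.cast_smul_eq_nsmul ℝ, smul_smul]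
  rw [Nat.cast_succ, inv_mul_eq_div]

theorem tupleSum_zero_zero : tupleSum 0 0 = 1 := by
  simp [tupleSum, tupleMonomial]

theorem pderivMv_zero_smul_tupleSum (k : ℕ) :
    pderivMv 0 (((k : ℝ) + 1)⁻¹ • tupleSum (k + 1) k) = tupleSum k k := by
  have h := pderivMv_tupleSum 0 k k
  rw [zero_add, Nat.factorial_zero, Nat.cast_one, div_one] at h
  rw [pderivMv_smul, h, smul_smul, inv_mul_cancel₀ (by positivity), one_smul]

/-- `∂I₀/∂t₀ = 1 + ∑_{k≥1} ∑_{p₁+⋯+p_k = k} (t_{p₁}/p₁!)⋯(t_{p_k}/p_k!)`. -/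
theorem pderiv_t0_I0 :
    pderivMv 0 I0series
      = 1 + ∑' k : ℕ,
          ∑ p ∈ Finset.Nat.antidiagonalTuple (k + 1) (k + 1),
            (∏ i, ((p i).factorial : ℝ)⁻¹) • ∏ i, MvPowerSeries.X (p i) := by
  have hI0 : HasSum (fun k : ℕ => ((k : ℝ) + 1)⁻¹ • tupleSum (k + 1) k) I0series :=
    (summable_smul_tupleSum (add_left_injective 1) _).hasSum
  have hderiv : HasSum (fun k => tupleSum k k) (pderivMv 0 I0series) := by
    simpa only [pderivMv_zero_smul_tupleSum] using hasSum_pderivMv 0 hI0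
  rw [← hderiv.tsum_eq, hderiv.summable.tsum_eq_zero_add, tupleSum_zero_zero]
  rfl
end

section
/- The formal power series identity ∑_{n≥0} (2n−1)!! x^n = 1/(1 − x/(1 − 2x/(1 − 3x/(1 − ⋯)))) holds, i.e. the generating function of double factorials of odd numbers equals the given continued fraction: if C_N(x) denotes the N-th convergent defined by C with c_k = kx, then the coefficients of C_N agree with (2n−1)!! for n ≤ N. -/
/-!
Let `B k` (`cfSeries k` below) be the series with coefficients `C(k + 2n - 1, 2n) · (2n - 1)‼`,
that is `₂F₀(k/2, (k+1)/2; ; 2x)`. Then `B 0 = 1`, `B 1 = ∑ (2n - 1)‼ xⁿ`, and the contiguous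
relation `B (k+1) = B k + (k+1) x B (k+2)` says that the ratios `B (k+1) / B k` are the tails of
the continued fraction: `B (k+1) / B k = 1 / (1 - (k+1) x · B (k+2) / B (k+1))`.
Replacing the innermost tail by `1` is an error `O(x)`; every level of the fraction multiplies
it by `x`, and inverting units preserves congruences modulo `xⁿ`, so `C_N ≡ B 1 / B 0` modulo
`x^(N+1)`.
-/

open PowerSeries

/-- The tail, from the bottom, of the `N`-th convergent of the continued fraction
`1/(1 − x/(1 − 2x/(1 − 3x/(⋯ 1 − Nx))))` with `c_k = kx`:
`cfTail N 0 = 1` and `cfTail N (j+1) = (1 − (N−j)x · cfTail N j)⁻¹`,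
so that `cfTail N N` is the `N`-th convergent `C_N(x)`. -/
noncomputable def cfTail (N : ℕ) : ℕ → PowerSeries ℝ
  | 0 => 1
  | j + 1 => (1 - ((N - j : ℕ) : ℝ) • PowerSeries.X * cfTail N j)⁻¹

open scoped Nat

theorem choose_mul_doubleFactorial_recurrence (k n : ℕ) :
    (k + 2 * n + 2).choose (2 * n + 2) * (2 * n + 1)‼ =
      (k + 2 * n + 1).choose (2 * n + 2) * (2 * n + 1)‼ +
        (k + 1) * ((k + 2 * n + 1).choose (2 * n) * (2 * n - 1)‼) := by
  have absorb := Nat.choose_succ_right_eq (k + 2 * n + 1) (2 * n)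
  rw [show k + 2 * n + 1 - 2 * n = k + 1 by omega] at absorb
  rw [Nat.choose_succ_succ, Nat.doubleFactorial_add_one]
  linear_combination (2 * n - 1)‼ * absorb

section

variable (R : Type*) [CommSemiring R]

/-- At `k = 0` the truncated `k + 2n - 1` still gives the right coefficients `1, 0, 0, …`. -/
noncomputable def cfSeries (k : ℕ) : R⟦X⟧ :=
  mk fun n => (((k + 2 * n - 1).choose (2 * n) * (2 * n - 1)‼ : ℕ) : R)

variable {R}

@[simp]
theorem constantCoeff_cfSeries (k : ℕ) : constantCoeff (cfSeries R k) = 1 := by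
  simp [cfSeries, ← coeff_zero_eq_constantCoeff_apply]

theorem cfSeries_zero : cfSeries R 0 = 1 := by
  ext (_ | n) <;> simp [cfSeries, coeff_one, Nat.choose_eq_zero_of_lt]

theorem coeff_cfSeries_one (n : ℕ) : coeff n (cfSeries R 1) = ((2 * n - 1)‼ : R) := by
  simp [cfSeries]

theorem cfSeries_succ (k : ℕ) :
    cfSeries R (k + 1) = cfSeries R k + ((k + 1 : ℕ) : R) • X * cfSeries R (k + 2) := by
  ext (_ | n)
  · simp [cfSeries]
  · have := congrArg (Nat.cast (R := R)) (choose_mul_doubleFactorial_recurrence k n)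
    rw [map_add, smul_mul_assoc, coeff_smul, coeff_succ_X_mul]
    simp only [cfSeries, coeff_mk, smul_eq_mul]
    rw [show k + 1 + 2 * (n + 1) - 1 = k + 2 * n + 2 by omega,
      show k + 2 * (n + 1) - 1 = k + 2 * n + 1 by omega,
      show k + 2 + 2 * n - 1 = k + 2 * n + 1 by omega, show 2 * (n + 1) = 2 * n + 2 by ring,
      show 2 * n + 2 - 1 = 2 * n + 1 by omega]
    push_cast at this ⊢
    exact this

end

section Field

variable {K : Type*} [Field K]

theorem X_pow_dvd_inv_sub_inv {f g : K⟦X⟧} {n : ℕ} (hf : constantCoeff f ≠ 0)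
    (hg : constantCoeff g ≠ 0) (h : X ^ n ∣ f - g) : X ^ n ∣ f⁻¹ - g⁻¹ := by
  have hfg : f⁻¹ - g⁻¹ = f⁻¹ * g⁻¹ * (g - f) := by
    linear_combination (-f⁻¹) * PowerSeries.inv_mul_cancel g hg +
      g⁻¹ * PowerSeries.inv_mul_cancel f hf
  rw [hfg]
  exact dvd_mul_of_dvd_right (dvd_sub_comm.1 h) _

theorem inv_one_sub_smul_X_mul_cfSeries_div (k : ℕ) :
    (1 - ((k + 1 : ℕ) : K) • X * (cfSeries K (k + 2) * (cfSeries K (k + 1))⁻¹))⁻¹ =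
      cfSeries K (k + 1) * (cfSeries K k)⁻¹ := by
  rw [PowerSeries.inv_eq_iff_mul_eq_one (by simp)]
  linear_combination (cfSeries K k)⁻¹ * cfSeries_succ (R := K) k -
    (cfSeries K k)⁻¹ * ((k + 1 : ℕ) : K) • X * cfSeries K (k + 2) *
      PowerSeries.mul_inv_cancel (cfSeries K (k + 1)) (by simp) +
    PowerSeries.inv_mul_cancel (cfSeries K k) (by simp)

end Field

theorem X_pow_dvd_cfTail_sub {N j : ℕ} (hj : j ≤ N) :
    X ^ (j + 1) ∣ cfTail N j - cfSeries ℝ (N - j + 1) * (cfSeries ℝ (N - j))⁻¹ := by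
  induction j with
  | zero =>
    rw [zero_add, pow_one, X_dvd_iff]
    simp [cfTail, constantCoeff_inv]
  | succ j ih =>
    obtain ⟨k, hk⟩ : ∃ k, N - j = k + 1 := ⟨N - j - 1, by omega⟩
    rw [show N - (j + 1) = k by omega, cfTail, hk, ← inv_one_sub_smul_X_mul_cfSeries_div]
    refine X_pow_dvd_inv_sub_inv (by simp) (by simp) ?_
    rw [sub_sub_sub_cancel_left, ← mul_sub, pow_succ', smul_eq_C_mul]
    have ih := ih (by omega)
    rw [hk] at ih
    exact mul_dvd_mul (dvd_mul_left X _) (dvd_sub_comm.1 ih)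

/-- The generating function of the odd double factorials equals the continued
fraction `1/(1 − x/(1 − 2x/(1 − 3x/⋯)))`: for every `N`, the coefficients of the
`N`-th convergent `C_N` agree with `(2n−1)‼` for all `n ≤ N`. -/
theorem doubleFactorial_continued_fraction :
    ∀ N n : ℕ, n ≤ N →
      PowerSeries.coeff n (cfTail N N) = (Nat.doubleFactorial (2 * n - 1) : ℝ) := by
  intro N n hn
  have h := X_pow_dvd_iff.1 (X_pow_dvd_cfTail_sub (le_refl N)) n (by omega)
  rwa [Nat.sub_self, cfSeries_zero, inv_one, mul_one, map_sub, coeff_cfSeries_one, sub_eq_zero] at h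
end
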